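/- arXiv:0707.0700 — 12 statements merged into one kernel-verified Lean document; each statement's English description precedes it below -/
import Mathlib

section
/- (Division algorithm in ℤ[j].) For all a, b ∈ ℤ[j] with η⁺(b) ≠ 0, there exist γ, ρ ∈ ℤ[j] such that a = γ·b + ρ and η⁺(ρ) < η⁺(b). -/
/-!
Divide `a * star b` by the integer `n = η(b)` coordinatewise with rounded quotients, so that the
remainder `w` has both coordinates of absolute value at most `|n| / 2`. Since
`(a - γ * b) * star b = a * star b - γ * n`, multiplicativity of the norm gives
`η(a - γ * b) * n = η(w)`, and `|η(w)| = |w.re² - w.im²| ≤ n² / 4`; hence `η⁺(a - γ * b) ≤ η⁺(b) / 4`.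
-/

theorem Int.exists_two_mul_abs_sub_mul_le (p n : ℤ) (hn : n ≠ 0) :
    ∃ q : ℤ, 2 * |p - q * n| ≤ |n| := by
  refine ⟨round ((p : ℚ) / n), ?_⟩
  have hnQ : (n : ℚ) ≠ 0 := by exact_mod_cast hn
  have hsplit : |(p : ℚ) - round ((p : ℚ) / n) * n|
      = |(p : ℚ) / n - round ((p : ℚ) / n)| * |(n : ℚ)| := by
    rw [← abs_mul, sub_mul, div_mul_cancel₀ _ hnQ]
  have hround := mul_le_mul_of_nonneg_right (abs_sub_round ((p : ℚ) / n)) (abs_nonneg (n : ℚ))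
  exact_mod_cast (by linarith : (2 : ℚ) * |(p : ℚ) - round ((p : ℚ) / n) * n| ≤ |(n : ℚ)|)

namespace Zsqrtd

variable {d : ℤ}

theorem exists_two_mul_abs_sub_mul_intCast_le (c : ℤ√d) {n : ℤ} (hn : n ≠ 0) :
    ∃ γ : ℤ√d, 2 * |(c - γ * n).re| ≤ |n| ∧ 2 * |(c - γ * n).im| ≤ |n| := by
  obtain ⟨x, hx⟩ := Int.exists_two_mul_abs_sub_mul_le c.re n hn
  obtain ⟨y, hy⟩ := Int.exists_two_mul_abs_sub_mul_le c.im n hn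
  exact ⟨⟨x, y⟩, by simpa using hx, by simpa using hy⟩

theorem norm_sub_mul_mul_norm (a b γ : ℤ√d) :
    (a - γ * b).norm * b.norm = (a * star b - γ * b.norm).norm := by
  calc (a - γ * b).norm * b.norm = ((a - γ * b) * star b).norm := by rw [norm_mul, norm_conj]
    _ = (a * star b - γ * b.norm).norm := by rw [norm_eq_mul_conj]; ring_nf

theorem four_mul_abs_norm_le_of_two_mul_abs_le {w : ℤ√1} {m : ℤ}
    (hre : 2 * |w.re| ≤ m) (him : 2 * |w.im| ≤ m) : 4 * |w.norm| ≤ m ^ 2 := by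
  have hre2 : 4 * w.re ^ 2 ≤ m ^ 2 := by
    nlinarith [abs_nonneg w.re, sq_abs w.re]
  have him2 : 4 * w.im ^ 2 ≤ m ^ 2 := by
    nlinarith [abs_nonneg w.im, sq_abs w.im]
  rcases abs_cases w.norm with ⟨h, -⟩ | ⟨h, -⟩ <;> rw [h, norm_def] <;> nlinarith

end Zsqrtd

/-- Division algorithm in ℤ[j] (= ℤ√1): for all `a b` with `η⁺(b) = |norm b| ≠ 0`,
there exist `γ ρ` with `a = γ * b + ρ` and `η⁺(ρ) < η⁺(b)`. -/
theorem division_algorithm_Zj (a b : ℤ√1) (hb : |Zsqrtd.norm b| ≠ 0) :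
    ∃ γ ρ : ℤ√1, a = γ * b + ρ ∧ |Zsqrtd.norm ρ| < |Zsqrtd.norm b| := by
  have hn : b.norm ≠ 0 := abs_ne_zero.mp hb
  obtain ⟨γ, hre, him⟩ := Zsqrtd.exists_two_mul_abs_sub_mul_intCast_le (a * star b) hn
  refine ⟨γ, a - γ * b, by ring, ?_⟩
  have hbound : 4 * (|(a - γ * b).norm| * |b.norm|) ≤ |b.norm| ^ 2 := by
    rw [← abs_mul, Zsqrtd.norm_sub_mul_mul_norm]
    exact Zsqrtd.four_mul_abs_norm_le_of_two_mul_abs_le hre him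
  have hpos : 0 < |b.norm| := abs_pos.mpr hn
  nlinarith
end

section
/- (Division algorithm in ℤ[k].) For all a, b ∈ ℤ[k] with η⁺(b) ≠ 0, there exist γ, ρ ∈ ℤ[k] such that a = γ·b + ρ and η⁺(ρ) < η⁺(b). -/
open DualNumber TrivSqZeroExt

/-- Division algorithm in ℤ[k] (= dual numbers over ℤ): for all `a b` with
`η⁺(b) = (fst b)² ≠ 0`, there exist `γ ρ` with `a = γ * b + ρ` and `η⁺(ρ) < η⁺(b)`. -/
theorem division_algorithm_Zk (a b : DualNumber ℤ) (hb : (fst b) ^ 2 ≠ 0) :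
    ∃ γ ρ : DualNumber ℤ, a = γ * b + ρ ∧ (fst ρ) ^ 2 < (fst b) ^ 2 := by
  have hb0 : fst b ≠ 0 := by intro h; exact hb (by rw [h]; ring)
  refine ⟨inl (fst a / fst b), a - inl (fst a / fst b) * b, by ring, ?_⟩
  have hfst : fst (a - inl (fst a / fst b) * b) = fst a % fst b := by
    simp [Int.emod_def]; ring
  rw [hfst]
  have h1 : 0 ≤ fst a % fst b := Int.emod_nonneg _ hb0
  have h2 : fst a % fst b < |fst b| := (Int.emod_abs (fst a) (fst b)) ▸ Int.emod_lt_of_pos _ (abs_pos.mpr hb0)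
  have h3 : (fst a % fst b) ^ 2 < |fst b| ^ 2 := by nlinarith
  rwa [sq_abs] at h3
end

section
/- (Factorization into irreducibles in ℤ[j].) If a ∈ ℤ[j] is neither a zero divisor (η(a) ≠ 0) nor a unit, then there exist a unit u of ℤ[j] and irreducible elements q₁, …, q_m of ℤ[j] such that a = u·q₁⋯q_m. -/
/-! Induct on the absolute value of the norm, which is multiplicative and equals `1` exactly on
units: a non-unit, non-irreducible `a` splits as a product of two non-units, each of strictly
smaller nonzero norm. -/

theorem exists_unit_mul_prod_irreducible_of_monoidHom {M : Type*} [CommMonoid M] (f : M →* ℕ)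
    (hf : ∀ x, f x = 1 → IsUnit x) (a : M) (ha : f a ≠ 0) :
    ∃ (u : Mˣ) (qs : List M), (∀ q ∈ qs, Irreducible q) ∧ a = u * qs.prod := by
  induction hn : f a using Nat.strong_induction_on generalizing a with
  | _ n ih =>
    by_cases hunit : IsUnit a
    · exact ⟨hunit.unit, [], by simp, by simp⟩
    by_cases hirr : Irreducible a
    · exact ⟨1, [a], by simpa using hirr, by simp⟩
    obtain ⟨z, w, rfl, hz, hw⟩ : ∃ z w, a = z * w ∧ ¬IsUnit z ∧ ¬IsUnit w := by
      simpa [irreducible_iff, hunit] using hirr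
    rw [map_mul] at ha hn
    have hz1 : f z ≠ 1 := fun h => hz (hf z h)
    have hw1 : f w ≠ 1 := fun h => hw (hf w h)
    have hzlt : f z < n := by
      rw [← hn]; exact lt_mul_right (by grind) (by grind)
    have hwlt : f w < n := by
      rw [← hn]; exact lt_mul_left (by grind) (by grind)
    obtain ⟨uz, qz, hqz, rfl⟩ := ih _ hzlt z (left_ne_zero_of_mul ha) rfl
    obtain ⟨uw, qw, hqw, rfl⟩ := ih _ hwlt w (right_ne_zero_of_mul ha) rfl
    refine ⟨uz * uw, qz ++ qw, fun q hq => (List.mem_append.mp hq).elim (hqz q) (hqw q), ?_⟩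
    rw [List.prod_append, Units.val_mul]
    ac_rfl

theorem factorization_into_irreducibles_Zj_general (a : ℤ√1) (ha : Zsqrtd.norm a ≠ 0) :
    ∃ (u : (ℤ√1)ˣ) (qs : List (ℤ√1)),
      (∀ q ∈ qs, Irreducible q) ∧ a = (u : ℤ√1) * qs.prod :=
  exists_unit_mul_prod_irreducible_of_monoidHom
    (Int.natAbsHom.toMonoidHom.comp Zsqrtd.normMonoidHom)
    (fun _ => Zsqrtd.norm_eq_one_iff.mp) a (Int.natAbs_ne_zero.mpr ha)

/-- Factorization into irreducibles in ℤ[j]: if `a` is neither a zero divisor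
(`norm a ≠ 0`) nor a unit, then `a = u * q₁ ⋯ q_m` with `u` a unit and each `qᵢ`
irreducible. -/
theorem factorization_into_irreducibles_Zj (a : ℤ√1) (ha : Zsqrtd.norm a ≠ 0)
    (hu : ¬ IsUnit a) :
    ∃ (u : (ℤ√1)ˣ) (qs : List (ℤ√1)),
      (∀ q ∈ qs, Irreducible q) ∧ a = (u : ℤ√1) * qs.prod :=
  factorization_into_irreducibles_Zj_general a ha
end

section
/- (Factorization into irreducibles in ℤ[k].) If a ∈ ℤ[k] is neither a zero divisor (its real part fst a is nonzero) nor a unit, then there exist a unit u of ℤ[k] and irreducible elements q₁, …, q_m of ℤ[k] such that a = u·q₁⋯q_m. -/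
open DualNumber TrivSqZeroExt

private lemma two_le_natAbs_fst (a : DualNumber ℤ) (ha : fst a ≠ 0)
    (hu : ¬ IsUnit a) : 2 ≤ (fst a).natAbs := by
  rw [isUnit_iff_isUnit_fst, Int.isUnit_iff] at hu
  push_neg at hu
  omega

private lemma aux (n : ℕ) : ∀ a : DualNumber ℤ, (fst a).natAbs ≤ n → fst a ≠ 0 →
    ¬ IsUnit a →
    ∃ (u : (DualNumber ℤ)ˣ) (qs : List (DualNumber ℤ)),
      (∀ q ∈ qs, Irreducible q) ∧ a = (u : DualNumber ℤ) * qs.prod := by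
  induction n with
  | zero => intro a hn ha _; exact absurd (Int.natAbs_eq_zero.mp (Nat.le_zero.mp hn)) ha
  | succ n ih =>
    intro a hn ha hu
    by_cases hirr : Irreducible a
    · exact ⟨1, [a], by simpa using hirr, by simp⟩
    · rw [irreducible_iff] at hirr
      push_neg at hirr
      obtain ⟨b, c, habc, hb, hc⟩ := hirr hu
      have hfb : fst b ≠ 0 := fun h => ha (by rw [habc, fst_mul, h, zero_mul])
      have hfc : fst c ≠ 0 := fun h => ha (by rw [habc, fst_mul, h, mul_zero])
      have h2b := two_le_natAbs_fst b hfb hb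
      have h2c := two_le_natAbs_fst c hfc hc
      have hprod : (fst a).natAbs = (fst b).natAbs * (fst c).natAbs := by
        rw [habc, fst_mul, Int.natAbs_mul]
      have hbn : (fst b).natAbs ≤ n := by nlinarith
      have hcn : (fst c).natAbs ≤ n := by nlinarith
      obtain ⟨ub, bs, hbs, hbe⟩ := ih b hbn hfb hb
      obtain ⟨uc, cs, hcs, hce⟩ := ih c hcn hfc hc
      refine ⟨ub * uc, bs ++ cs, ?_, ?_⟩
      · intro q hq; rcases List.mem_append.mp hq with h | h
        exacts [hbs q h, hcs q h]
      · rw [habc, hbe, hce, List.prod_append, Units.val_mul]; ring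

/-- Factorization into irreducibles in ℤ[k]: if `a` is neither a zero divisor
(`fst a ≠ 0`) nor a unit, then `a = u * q₁ ⋯ q_m` with `u` a unit and each `qᵢ`
irreducible. -/
theorem factorization_into_irreducibles_Zk (a : DualNumber ℤ) (ha : fst a ≠ 0)
    (hu : ¬ IsUnit a) :
    ∃ (u : (DualNumber ℤ)ˣ) (qs : List (DualNumber ℤ)),
      (∀ q ∈ qs, Irreducible q) ∧ a = (u : DualNumber ℤ) * qs.prod := by
  exact aux (fst a).natAbs a le_rfl ha hu
end

section
/- The elements 1 + j and 1 − j are prime elements of ℤ[j]. -/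
open Zsqrtd

lemma one_add_j_dvd (z : ℤ√1) : (1 + sqrtd : ℤ√1) ∣ z ↔ z.re = z.im := by
  constructor
  · rintro ⟨w, rfl⟩
    simp [Zsqrtd.re_mul, Zsqrtd.im_mul, Zsqrtd.re_add, Zsqrtd.im_add]
    ring
  · intro h
    refine ⟨⟨z.re, 0⟩, ?_⟩
    ext <;> simp [Zsqrtd.re_mul, Zsqrtd.im_mul, h]

lemma one_sub_j_dvd (z : ℤ√1) : (1 - sqrtd : ℤ√1) ∣ z ↔ z.re = -z.im := by
  constructor
  · rintro ⟨w, rfl⟩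
    simp [Zsqrtd.re_mul, Zsqrtd.im_mul]
  · intro h
    refine ⟨⟨z.re, 0⟩, ?_⟩
    ext <;> simp [Zsqrtd.re_mul, Zsqrtd.im_mul, h]

/-- The elements `1 + j` and `1 − j` are prime in ℤ[j]. -/
theorem one_add_j_one_sub_j_prime :
    Prime (1 + sqrtd : ℤ√1) ∧ Prime (1 - sqrtd : ℤ√1) := by
  constructor
  · refine ⟨?_, ?_, ?_⟩
    · intro h
      have := congrArg Zsqrtd.im h
      simp at this
    · intro h
      have := (one_add_j_dvd 1).mp h.dvd
      simp at this
    · intro a b h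
      rw [one_add_j_dvd] at h
      rw [one_add_j_dvd, one_add_j_dvd]
      simp [Zsqrtd.re_mul, Zsqrtd.im_mul] at h
      have : (a.re - a.im) * (b.re - b.im) = 0 := by ring_nf; linarith
      rcases mul_eq_zero.mp this with h' | h'
      · left; linarith
      · right; linarith
  · refine ⟨?_, ?_, ?_⟩
    · intro h
      have := congrArg Zsqrtd.im h
      simp at this
    · intro h
      have := (one_sub_j_dvd 1).mp h.dvd
      simp at this
    · intro a b h
      rw [one_sub_j_dvd] at h
      rw [one_sub_j_dvd, one_sub_j_dvd]
      simp [Zsqrtd.re_mul, Zsqrtd.im_mul] at h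
      have : (a.re + a.im) * (b.re + b.im) = 0 := by ring_nf; linarith
      rcases mul_eq_zero.mp this with h' | h'
      · left; linarith
      · right; linarith
end

section
/- In ℤ[k], the element ε is irreducible; moreover, for every integer x with x ≠ 1 and x ≠ −1, the element x·ε is not irreducible. -/
/-!
A unit of `R[ε]` is exactly an element with unit real part, so `ε` is not a unit. If `a * b = ε`,
comparing real parts gives `a.fst * b.fst = 0` and comparing `ε`-parts gives
`a.fst * b.snd + a.snd * b.fst = 1`; over a domain one real part vanishes and the other is then
a unit. On the other hand `x * ε` is the product of two non-units as soon as `x` is not a unit.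
-/

open DualNumber

namespace DualNumber

variable {R : Type*}

theorem not_isUnit_eps [CommRing R] [Nontrivial R] : ¬IsUnit (ε : R[ε]) := by
  simp [TrivSqZeroExt.isUnit_iff_isUnit_fst]

theorem isUnit_or_isUnit_of_mul_eq_eps [CommRing R] [IsDomain R] {a b : R[ε]}
    (hab : a * b = ε) : IsUnit a ∨ IsUnit b := by
  have hfst : a.fst * b.fst = 0 := by simpa using congrArg TrivSqZeroExt.fst hab
  have hsnd : a.fst * b.snd + a.snd * b.fst = 1 := by
    simpa [mul_comm] using congrArg TrivSqZeroExt.snd hab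
  simp only [TrivSqZeroExt.isUnit_iff_isUnit_fst]
  rcases mul_eq_zero.mp hfst with ha | hb
  · rw [ha, zero_mul, zero_add] at hsnd
    exact Or.inr (.of_mul_eq_one_right _ hsnd)
  · rw [hb, mul_zero, add_zero] at hsnd
    exact Or.inl (.of_mul_eq_one _ hsnd)

theorem irreducible_eps [CommRing R] [IsDomain R] : Irreducible (ε : R[ε]) :=
  ⟨not_isUnit_eps, fun _ _ hab => isUnit_or_isUnit_of_mul_eq_eps hab.symm⟩

theorem not_irreducible_mul_eps [CommRing R] [Nontrivial R] {a : R[ε]}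
    (ha : ¬IsUnit a.fst) : ¬Irreducible (a * ε) := fun h =>
  (h.isUnit_or_isUnit rfl).elim (ha ∘ TrivSqZeroExt.isUnit_iff_isUnit_fst.mp) not_isUnit_eps

end DualNumber

/-- In ℤ[k], `ε` is irreducible, and for every integer `x ≠ ±1`, `x·ε` is not
irreducible. -/
theorem eps_irreducible_and_xe_reducible :
    Irreducible (ε : DualNumber ℤ) ∧
    ∀ x : ℤ, x ≠ 1 → x ≠ -1 → ¬ Irreducible ((x : DualNumber ℤ) * ε) := by
  refine ⟨irreducible_eps, fun x hx₁ hx₂ => not_irreducible_mul_eps ?_⟩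
  rw [TrivSqZeroExt.fst_intCast, Int.isUnit_iff]
  exact not_or_intro hx₁ hx₂
end

section
/- The prime elements of ℤ[k] are exactly ε and −ε; that is, z ∈ ℤ[k] is prime if and only if z = ε or z = −ε. -/
/-!
Over a domain `R`, a prime `p` of `R[ε]` divides `ε * ε = 0`, hence divides `ε`; writing
`ε = p * c` and comparing components forces `p.fst = 0` and `p.snd` a unit, since otherwise
`p.fst` would be a unit and so would `p`. Conversely such a `p` is associated to `ε`, which is
prime because `ε ∣ w ↔ w.fst = 0`. Over `ℤ` the units are `±1`.
-/

open DualNumber TrivSqZeroExt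

namespace DualNumber

variable {R : Type*} [CommRing R]

theorem eps_dvd_iff {w : R[ε]} : ε ∣ w ↔ w.fst = 0 := by
  constructor
  · rintro ⟨c, rfl⟩
    simp [fst_mul]
  · intro h
    exact ⟨inl w.snd, by ext <;> simp [h]⟩

theorem prime_eps [NoZeroDivisors R] [Nontrivial R] : Prime (ε : R[ε]) := by
  refine ⟨fun h ↦ by simpa using congrArg snd h, fun h ↦ ?_, fun x y h ↦ ?_⟩
  · simp [isUnit_iff_isUnit_fst] at h
  · simpa only [eps_dvd_iff, fst_mul, mul_eq_zero] using h

theorem fst_eq_zero_and_isUnit_snd_of_dvd_eps [NoZeroDivisors R] {p : R[ε]}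
    (hp : ¬IsUnit p) (hdvd : p ∣ ε) : p.fst = 0 ∧ IsUnit p.snd := by
  obtain ⟨c, hc⟩ := hdvd
  have hfst : p.fst * c.fst = 0 := by simpa using (congrArg fst hc).symm
  have hsnd : p.fst * c.snd + p.snd * c.fst = 1 := by
    simpa [snd_mul] using (congrArg snd hc).symm
  rw [isUnit_iff_isUnit_fst] at hp
  rcases mul_eq_zero.mp hfst with hp0 | hc0
  · rw [hp0, zero_mul, zero_add] at hsnd
    exact ⟨hp0, IsUnit.of_mul_eq_one _ hsnd⟩
  · rw [hc0, mul_zero, add_zero] at hsnd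
    exact absurd (IsUnit.of_mul_eq_one _ hsnd) hp

theorem associated_eps_of_fst_eq_zero {p : R[ε]} (h0 : p.fst = 0) (hu : IsUnit p.snd) :
    Associated ε p :=
  ⟨(isUnit_inl_iff.mpr hu).unit, by ext <;> simp [h0]⟩

theorem prime_iff [NoZeroDivisors R] [Nontrivial R] {p : R[ε]} :
    Prime p ↔ p.fst = 0 ∧ IsUnit p.snd := by
  refine ⟨fun hp ↦ ?_, fun ⟨h0, hu⟩ ↦ (associated_eps_of_fst_eq_zero h0 hu).prime prime_eps⟩
  have hdvd : p ∣ ε := (hp.dvd_or_dvd (by simp [eps_mul_eps])).elim id id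
  exact fst_eq_zero_and_isUnit_snd_of_dvd_eps hp.not_isUnit hdvd

end DualNumber

/-- The prime elements of ℤ[k] are exactly `ε` and `−ε`. -/
theorem prime_iff_eps_or_neg_eps (z : DualNumber ℤ) :
    Prime z ↔ z = ε ∨ z = -ε := by
  rw [DualNumber.prime_iff, Int.isUnit_iff]
  constructor
  · rintro ⟨h0, h1 | h1⟩
    · exact .inl (by ext <;> simp [h0, h1])
    · exact .inr (by ext <;> simp [h0, h1])
  · rintro (rfl | rfl) <;> simp
end

section
/- Let x ∈ ℤ and let z = (x+1) + jx or z = (x+1) − jx in ℤ[j]. The following are equivalent: (i) η(z) = 2x + 1 is a prime element of ℤ; (ii) z is irreducible in ℤ[j]; (iii) z is a prime element of ℤ[j]. -/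
/-!
For `e = ±1` the substitution `j ↦ e` is a surjective ring map `ℤ[j] → ℤ` sending
`z = (x + 1) + j e x` to `2x + 1`, and `z ∣ w` holds exactly when `2x + 1` divides the image of `w`;
primality therefore transfers between `z` and `2x + 1`. Since `ℤ[j]` is not a domain, prime does
not imply irreducible for free, but `z` is not a zero divisor, which suffices. Conversely, a
factorization of the odd number `2x + 1` is a product `(2s + 1)(2t + 1)`, and it lifts to the
factorization `z = ((s + 1) + j e s)((t + 1) + j e t)`.
-/

theorem Prime.irreducible_of_isLeftRegular {M : Type*} [CommMonoidWithZero M] {p : M}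
    (hp : Prime p) (hreg : IsLeftRegular p) : Irreducible p := by
  refine ⟨hp.not_isUnit, fun a b hab => ?_⟩
  have unit_of_dvd : ∀ {u v : M}, p = u * v → p ∣ u → IsUnit v := by
    rintro u v huv ⟨c, rfl⟩
    exact IsUnit.of_mul_eq_one_right c (hreg (by simp only [mul_one, ← mul_assoc, ← huv]))
  rcases hp.dvd_or_dvd (dvd_of_eq hab) with h | h
  · exact Or.inr (unit_of_dvd hab h)
  · exact Or.inl (unit_of_dvd (hab.trans (mul_comm a b)) h)

theorem prime_iff_of_dvd_iff {R S : Type*} [CommMonoidWithZero R] [CommMonoidWithZero S]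
    (f : R →* S) (hf : Function.Surjective f) {p : R} {q : S} (hp : p ≠ 0) (hq : q ≠ 0)
    (hdvd : ∀ w, p ∣ w ↔ q ∣ f w) : Prime p ↔ Prime q := by
  have hunit : IsUnit p ↔ IsUnit q := by
    rw [isUnit_iff_dvd_one, isUnit_iff_dvd_one, hdvd, map_one]
  refine ⟨fun h => ⟨hq, hunit.not.mp h.not_isUnit, fun a b hab => ?_⟩,
    fun h => ⟨hp, hunit.not.mpr h.not_isUnit, fun a b hab => ?_⟩⟩
  · obtain ⟨a, rfl⟩ := hf a
    obtain ⟨b, rfl⟩ := hf b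
    simpa only [hdvd] using h.dvd_or_dvd ((hdvd _).mpr (by rwa [map_mul]))
  · simpa only [hdvd] using h.dvd_or_dvd (by rwa [← map_mul, ← hdvd])

namespace Zsqrtd

theorem lift_apply_diag {e : ℤ} (he : e * e = 1) (x : ℤ) :
    lift ⟨e, he⟩ ⟨x + 1, e * x⟩ = 2 * x + 1 := by
  simp only [lift_apply_apply, Int.cast_id]
  linear_combination x * he

theorem diag_dvd_iff {e : ℤ} (he : e * e = 1) (x : ℤ) (w : ℤ√1) :
    (⟨x + 1, e * x⟩ : ℤ√1) ∣ w ↔ 2 * x + 1 ∣ lift ⟨e, he⟩ w := by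
  refine ⟨fun h => lift_apply_diag he x ▸ map_dvd _ h, fun ⟨k, hk⟩ => ?_⟩
  simp only [lift_apply_apply, Int.cast_id] at hk
  -- Under `ℤ√1 ↪ ℤ × ℤ`, `w ↦ (w.re + e w.im, w.re - e w.im)`, the divisor is `(2x + 1, 1)`
  -- and the quotient is `(k, w.re - e w.im)`.
  refine ⟨⟨w.re - x * k, e * ((x + 1) * k - w.re)⟩, ?_⟩
  ext <;> simp only [re_mul, im_mul]
  · linear_combination (-(x * ((x + 1) * k - w.re))) * he
  · linear_combination e * hk + (-w.im) * he

theorem diag_ne_zero {e : ℤ} (he : e * e = 1) (x : ℤ) : (⟨x + 1, e * x⟩ : ℤ√1) ≠ 0 := by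
  intro h
  have h1 : x + 1 = 0 := congrArg re h
  have h2 : e * x = 0 := congrArg im h
  have : e * e * x = 0 := by rw [mul_assoc, h2, mul_zero]
  rw [he] at this
  omega

theorem prime_diag_iff {e : ℤ} (he : e * e = 1) (x : ℤ) :
    Prime (⟨x + 1, e * x⟩ : ℤ√1) ↔ Prime (2 * x + 1) :=
  prime_iff_of_dvd_iff (lift ⟨e, he⟩).toMonoidHom (fun n => ⟨n, by simp⟩)
    (diag_ne_zero he x) (by omega) (diag_dvd_iff he x)

theorem isLeftRegular_diag {e : ℤ} (he : e * e = 1) (x : ℤ) :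
    IsLeftRegular (⟨x + 1, e * x⟩ : ℤ√1) := by
  refine isLeftRegular_iff_right_eq_zero_of_mul.mpr fun w hw => ?_
  have h1 := congrArg re hw
  have h2 := congrArg im hw
  simp only [re_mul, im_mul, re_zero, im_zero, one_mul] at h1 h2
  have hre : w.re = e * w.im := by linear_combination h1 - e * h2 + x * w.re * he
  have him : (e * (2 * x + 1)) * w.im = 0 := by linear_combination h1 - (x + 1) * hre
  have he0 : e ≠ 0 := by rintro rfl; simp at he
  have hw : w.im = 0 := (mul_eq_zero.mp him).resolve_left (mul_ne_zero he0 (by omega))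
  ext
  · simp [hre, hw]
  · exact hw

theorem diag_mul_diag {e : ℤ} (he : e * e = 1) (s t : ℤ) :
    (⟨s + 1, e * s⟩ : ℤ√1) * ⟨t + 1, e * t⟩ =
      ⟨(2 * s * t + s + t) + 1, e * (2 * s * t + s + t)⟩ := by
  ext <;> simp only [re_mul, im_mul]
  · linear_combination s * t * he
  · ring

theorem prime_of_irreducible_diag {e : ℤ} (he : e * e = 1) (x : ℤ)
    (hirr : Irreducible (⟨x + 1, e * x⟩ : ℤ√1)) : Prime (2 * x + 1) := by
  have hunit (y : ℤ) : IsUnit (⟨y + 1, e * y⟩ : ℤ√1) ↔ IsUnit (2 * y + 1) := by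
    rw [isUnit_iff_dvd_one, isUnit_iff_dvd_one, diag_dvd_iff he, map_one]
  rw [← irreducible_iff_prime]
  refine ⟨(hunit x).not.mp hirr.not_isUnit, fun a b hab => ?_⟩
  obtain ⟨⟨s, rfl⟩, ⟨t, rfl⟩⟩ := Int.odd_mul.mp (hab ▸ odd_two_mul_add_one x)
  obtain rfl : x = 2 * s * t + s + t := by linarith
  simpa only [← hunit] using hirr.isUnit_or_isUnit (diag_mul_diag he s t).symm

end Zsqrtd

/-- For `z = (x+1) + jx` or `z = (x+1) − jx` in ℤ[j], TFAE:
(i) `η(z) = 2x + 1` is prime in ℤ; (ii) `z` is irreducible in ℤ[j];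
(iii) `z` is prime in ℤ[j]. -/
theorem tfae_diag_neighbors (x : ℤ) (z : ℤ√1)
    (hz : z = ⟨x + 1, x⟩ ∨ z = ⟨x + 1, -x⟩) :
    (Prime (2 * x + 1) ↔ Irreducible z) ∧ (Irreducible z ↔ Prime z) := by
  obtain ⟨e, he, rfl⟩ : ∃ e : ℤ, e * e = 1 ∧ z = ⟨x + 1, e * x⟩ := by
    rcases hz with rfl | rfl
    exacts [⟨1, by norm_num, by simp⟩, ⟨-1, by norm_num, by simp⟩]
  have prime_iff := Zsqrtd.prime_diag_iff he x
  have irreducible_of_prime (h : Prime (⟨x + 1, e * x⟩ : ℤ√1)) :=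
    h.irreducible_of_isLeftRegular (Zsqrtd.isLeftRegular_diag he x)
  have prime_of_irreducible := Zsqrtd.prime_of_irreducible_diag he x
  exact ⟨⟨irreducible_of_prime ∘ prime_iff.mpr, prime_of_irreducible⟩,
    ⟨prime_iff.mpr ∘ prime_of_irreducible, irreducible_of_prime⟩⟩
end

section
/- If a ∈ ℤ[j] is not a zero divisor (η(a) ≠ 0), is irreducible in ℤ[j], and is not a prime element of ℤ[j], then η⁺(a) = 2^γ for some natural number γ ≥ 1. -/
/-!
The two evaluations `j ↦ 1` and `j ↦ -1` embed `ℤ[j]` into `ℤ × ℤ` as the pairs `(u, v)` with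
`u ≡ v (mod 2)`, and the norm becomes `u * v`. If an odd prime `p` divides the norm of an
irreducible `a`, it divides `u` or `v`, say `u`; the element `b` with coordinates `(p, 1)` then
divides `a`, so `a` is associated to `b`. And `b` is prime: `b ∣ x * y` forces `p` to divide the
first coordinate of `x` or of `y`, while the second coordinate `1` imposes nothing. Hence the
norm of an irreducible non-prime has no odd prime factor, and it is not `±1` since `a` is not a
unit.
-/

namespace Zsqrtd

def evalOne : ℤ√1 →+* ℤ := lift ⟨1, by norm_num⟩

def evalNegOne : ℤ√1 →+* ℤ := lift ⟨-1, by norm_num⟩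

theorem evalOne_apply (z : ℤ√1) : evalOne z = z.re + z.im := by
  simp [evalOne, lift_apply_apply]

theorem evalNegOne_apply (z : ℤ√1) : evalNegOne z = z.re - z.im := by
  simp [evalNegOne, lift_apply_apply, sub_eq_add_neg]

theorem evalOne_star (z : ℤ√1) : evalOne (star z) = evalNegOne z := by
  rw [evalOne_apply, evalNegOne_apply, re_star, im_star, sub_eq_add_neg]

theorem norm_eq_evalOne_mul_evalNegOne (z : ℤ√1) : z.norm = evalOne z * evalNegOne z := by
  rw [norm_def, evalOne_apply, evalNegOne_apply]
  ring

theorem even_evalOne_sub_evalNegOne (z : ℤ√1) : Even (evalOne z - evalNegOne z) :=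
  ⟨z.im, by rw [evalOne_apply, evalNegOne_apply]; ring⟩

theorem ext_evalOne_evalNegOne {w z : ℤ√1} (h₁ : evalOne w = evalOne z)
    (h₂ : evalNegOne w = evalNegOne z) : w = z := by
  rw [evalOne_apply, evalOne_apply] at h₁
  rw [evalNegOne_apply, evalNegOne_apply] at h₂
  ext <;> omega

theorem exists_evalOne_eq_evalNegOne_eq {u v : ℤ} (h : Even (u - v)) :
    ∃ z : ℤ√1, evalOne z = u ∧ evalNegOne z = v := by
  obtain ⟨m, hm⟩ := h
  refine ⟨⟨v + m, m⟩, ?_, ?_⟩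
  · rw [evalOne_apply]; dsimp only; omega
  · rw [evalNegOne_apply]; dsimp only; omega

theorem dvd_of_evalOne_dvd_of_evalNegOne_dvd {b z : ℤ√1} (hb : Odd (evalOne b))
    (hU : evalOne b ∣ evalOne z) (hV : evalNegOne b ∣ evalNegOne z) : b ∣ z := by
  obtain ⟨s, hs⟩ := hU
  obtain ⟨t, ht⟩ := hV
  have hb' : Odd (evalNegOne b) := by
    simpa using hb.sub_even (even_evalOne_sub_evalNegOne b)
  -- `s ≡ evalOne b * s = evalOne z ≡ evalNegOne z = evalNegOne b * t ≡ t (mod 2)`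
  have hst : Even (s - t) := by
    have := even_evalOne_sub_evalNegOne z
    rw [hs, ht] at this
    rw [Int.even_sub] at this ⊢
    simpa [Int.even_mul, Int.not_even_iff_odd.2 hb, Int.not_even_iff_odd.2 hb'] using this
  obtain ⟨c, hcU, hcV⟩ := exists_evalOne_eq_evalNegOne_eq hst
  exact ⟨c, ext_evalOne_evalNegOne (by rw [map_mul, hcU, hs]) (by rw [map_mul, hcV, ht])⟩

theorem prime_of_prime_evalOne {b : ℤ√1} (hp : Prime (evalOne b))
    (hV : IsUnit (evalNegOne b)) : Prime b := by
  have hodd : Odd (evalOne b) := by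
    have hV' : Odd (evalNegOne b) := by
      rcases Int.isUnit_iff.1 hV with h | h <;> simp [h]
    simpa using hV'.add_even (even_evalOne_sub_evalNegOne b)
  refine ⟨fun hb => hp.ne_zero (by rw [hb, map_zero]), fun hb => hp.not_isUnit (hb.map _),
    fun x y hxy => ?_⟩
  have := map_dvd evalOne hxy
  rw [map_mul] at this
  exact (hp.dvd_or_dvd this).imp
    (dvd_of_evalOne_dvd_of_evalNegOne_dvd hodd · hV.dvd)
    (dvd_of_evalOne_dvd_of_evalNegOne_dvd hodd · hV.dvd)

theorem prime_of_irreducible_of_prime_dvd_evalOne {a : ℤ√1} (ha : Irreducible a) {p : ℤ}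
    (hp : Prime p) (hodd : Odd p) (hpa : p ∣ evalOne a) : Prime a := by
  obtain ⟨b, hbU, hbV⟩ := exists_evalOne_eq_evalNegOne_eq (u := p) (v := 1) (hodd.sub_odd odd_one)
  have hb : Prime b := prime_of_prime_evalOne (hbU ▸ hp) (by rw [hbV]; exact isUnit_one)
  obtain ⟨c, rfl⟩ : b ∣ a := dvd_of_evalOne_dvd_of_evalNegOne_dvd (hbU ▸ hodd) (hbU ▸ hpa)
    (by rw [hbV]; exact one_dvd _)
  have hc : IsUnit c := (ha.isUnit_or_isUnit rfl).resolve_left hb.not_isUnit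
  exact (associated_mul_unit_right b c hc).prime hb

theorem prime_of_irreducible_of_odd_prime_dvd_norm {a : ℤ√1} (ha : Irreducible a) {p : ℤ}
    (hp : Prime p) (hodd : Odd p) (hpa : p ∣ a.norm) : Prime a := by
  rw [norm_eq_evalOne_mul_evalNegOne] at hpa
  rcases hp.dvd_or_dvd hpa with hU | hV
  · exact prime_of_irreducible_of_prime_dvd_evalOne ha hp hodd hU
  · rw [← evalOne_star] at hV
    let σ : RingAut (ℤ√1) := starRingAut
    exact (MulEquiv.prime_iff σ).1 <|
      prime_of_irreducible_of_prime_dvd_evalOne ((MulEquiv.irreducible_iff σ).2 ha) hp hodd hV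

end Zsqrtd

/-- If `a ∈ ℤ[j]` is not a zero divisor (`norm a ≠ 0`), is irreducible but not prime,
then `η⁺(a) = |norm a| = 2^γ` for some natural `γ ≥ 1`. -/
theorem norm_of_irreducible_not_prime (a : ℤ√1) (ha : Zsqrtd.norm a ≠ 0)
    (hirr : Irreducible a) (hnp : ¬ Prime a) :
    ∃ γ : ℕ, 1 ≤ γ ∧ |Zsqrtd.norm a| = 2 ^ γ := by
  have h2 : ∀ {p : ℕ}, p.Prime → p ∣ a.norm.natAbs → p = 2 := fun {p} hp hpa => by
    by_contra hp2
    exact hnp <| Zsqrtd.prime_of_irreducible_of_odd_prime_dvd_norm hirr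
      (Nat.prime_iff_prime_int.1 hp) (Int.odd_coe_nat p |>.2 (hp.odd_of_ne_two hp2))
      (Int.natCast_dvd.2 hpa)
  obtain ⟨γ, hγ⟩ : ∃ γ, a.norm.natAbs = 2 ^ γ :=
    ⟨_, Nat.eq_prime_pow_of_unique_prime_dvd (Int.natAbs_ne_zero.2 ha) h2⟩
  refine ⟨γ, Nat.one_le_iff_ne_zero.2 ?_, by rw [Int.abs_eq_natAbs, hγ]; push_cast; rfl⟩
  rintro rfl
  exact hirr.not_isUnit ((Zsqrtd.isUnit_iff_norm_isUnit a).2 (Int.isUnit_iff_natAbs_eq.2 hγ))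
end

section
/- Let γ ≥ 0 be a natural number and let a ∈ ℤ[j] satisfy η(a) = 2^{γ+2} and Re(a) > 0. Then a is irreducible in ℤ[j] if and only if a = (2^γ + 1) + j(2^γ − 1) or a = (2^γ + 1) − j(2^γ − 1). -/
private lemma norm_st (z : ℤ√1) : z.norm = (z.re + z.im) * (z.re - z.im) := by
  simp [Zsqrtd.norm]; ring

private lemma s_mul (z w : ℤ√1) :
    ((z * w).re + (z * w).im) = (z.re + z.im) * (w.re + w.im) := by
  simp [Zsqrtd.re_mul, Zsqrtd.im_mul]; ring

private lemma t_mul (z w : ℤ√1) :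
    ((z * w).re - (z * w).im) = (z.re - z.im) * (w.re - w.im) := by
  simp [Zsqrtd.re_mul, Zsqrtd.im_mul]; ring

private lemma isUnit_iff_norm (z : ℤ√1) : IsUnit z ↔ z.norm = 1 ∨ z.norm = -1 := by
  rw [← Zsqrtd.norm_eq_one_iff]
  omega

private lemma eq_pm_one_of_odd_dvd {s : ℤ} (n : ℕ) (hodd : ¬ (2:ℤ) ∣ s)
    (h : s ∣ 2 ^ n) : s = 1 ∨ s = -1 := by
  have h1 : s.natAbs ∣ 2 ^ n := by
    have := Int.natAbs_dvd_natAbs.mpr h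
    rwa [show ((2:ℤ) ^ n).natAbs = 2 ^ n by simp [Int.natAbs_pow]] at this
  have h2 : ¬ 2 ∣ s.natAbs := by
    intro hc
    exact hodd (Int.natAbs_dvd_natAbs.mp (by simpa using hc))
  have hcop : Nat.Coprime s.natAbs 2 :=
    Nat.coprime_comm.mp (Nat.prime_two.coprime_iff_not_dvd.mpr h2)
  have h3 : s.natAbs = 1 := Nat.Coprime.eq_one_of_dvd (hcop.pow_right n) h1
  rcases Int.natAbs_eq s with h' | h' <;> omega

private lemma isUnit_of_dvd_pow (z : ℤ√1) {m n : ℕ}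
    (hs : (z.re + z.im) ∣ 2 ^ m) (ht : (z.re - z.im) ∣ 2 ^ n)
    (hodd : ¬ (2:ℤ) ∣ (z.re + z.im) ∨ ¬ (2:ℤ) ∣ (z.re - z.im)) : IsUnit z := by
  have hpar : ¬ (2:ℤ) ∣ (z.re + z.im) ∧ ¬ (2:ℤ) ∣ (z.re - z.im) := by
    rcases hodd with h | h <;> constructor <;> omega
  rcases eq_pm_one_of_odd_dvd m hpar.1 hs with h1 | h1 <;>
    rcases eq_pm_one_of_odd_dvd n hpar.2 ht with h2 | h2 <;>
      · rw [isUnit_iff_norm, norm_st, h1, h2]; norm_num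

private lemma irr_aux (γ : ℕ) (a : ℤ√1)
    (h : (a.re + a.im = 2 ^ (γ + 1) ∧ a.re - a.im = 2) ∨
         (a.re + a.im = 2 ∧ a.re - a.im = 2 ^ (γ + 1))) :
    Irreducible a := by
  have h2pos : (1:ℤ) ≤ 2 ^ (γ + 1) := one_le_pow₀ (by norm_num)
  constructor
  · rw [isUnit_iff_norm, norm_st]
    rcases h with ⟨e1, e2⟩ | ⟨e1, e2⟩ <;> rw [e1, e2] <;> intro hc <;>
      rcases hc with hc | hc <;> nlinarith
  · intro z w hzw
    have hs := s_mul z w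
    have ht := t_mul z w
    rw [← hzw] at hs ht
    rcases h with ⟨e1, e2⟩ | ⟨e1, e2⟩
    · have hsz : (z.re + z.im) ∣ 2 ^ (γ + 1) := ⟨_, by rw [← e1, hs]⟩
      have hsw : (w.re + w.im) ∣ 2 ^ (γ + 1) := ⟨_, by rw [← e1, hs, mul_comm]⟩
      have htz : (z.re - z.im) ∣ 2 ^ 1 := ⟨_, by rw [pow_one, ← e2, ht]⟩
      have htw : (w.re - w.im) ∣ 2 ^ 1 := ⟨_, by rw [pow_one, ← e2, ht, mul_comm]⟩
      have hnb : ¬ (2:ℤ) ∣ (z.re - z.im) ∨ ¬ (2:ℤ) ∣ (w.re - w.im) := by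
        by_contra hc
        push_neg at hc
        obtain ⟨⟨p, hp⟩, q, hq⟩ := hc
        rw [e2, hp, hq] at ht
        have h4 : (4:ℤ) * (p * q) = 2 := by linear_combination -ht
        omega
      rcases hnb with hodd | hodd
      · exact Or.inl (isUnit_of_dvd_pow z hsz htz (Or.inr hodd))
      · exact Or.inr (isUnit_of_dvd_pow w hsw htw (Or.inr hodd))
    · have hsz : (z.re + z.im) ∣ 2 ^ 1 := ⟨_, by rw [pow_one, ← e1, hs]⟩
      have hsw : (w.re + w.im) ∣ 2 ^ 1 := ⟨_, by rw [pow_one, ← e1, hs, mul_comm]⟩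
      have htz : (z.re - z.im) ∣ 2 ^ (γ + 1) := ⟨_, by rw [← e2, ht]⟩
      have htw : (w.re - w.im) ∣ 2 ^ (γ + 1) := ⟨_, by rw [← e2, ht, mul_comm]⟩
      have hnb : ¬ (2:ℤ) ∣ (z.re + z.im) ∨ ¬ (2:ℤ) ∣ (w.re + w.im) := by
        by_contra hc
        push_neg at hc
        obtain ⟨⟨p, hp⟩, q, hq⟩ := hc
        rw [e1, hp, hq] at hs
        have h4 : (4:ℤ) * (p * q) = 2 := by linear_combination -hs
        omega
      rcases hnb with hodd | hodd
      · exact Or.inl (isUnit_of_dvd_pow z hsz htz (Or.inl hodd))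
      · exact Or.inr (isUnit_of_dvd_pow w hsw htw (Or.inl hodd))

/-- Let `γ ≥ 0` and `a ∈ ℤ[j]` with `η(a) = 2^(γ+2)` and `Re(a) > 0`. Then `a` is
irreducible iff `a = (2^γ + 1) + j(2^γ − 1)` or `a = (2^γ + 1) − j(2^γ − 1)`. -/
theorem irreducible_iff_special_form (γ : ℕ) (a : ℤ√1)
    (hnorm : Zsqrtd.norm a = 2 ^ (γ + 2)) (hre : 0 < a.re) :
    Irreducible a ↔
      a = ⟨2 ^ γ + 1, 2 ^ γ - 1⟩ ∨ a = ⟨2 ^ γ + 1, -(2 ^ γ - 1)⟩ := by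
  constructor
  · intro h
    have hst : (a.re + a.im) * (a.re - a.im) = 2 ^ (γ + 2) := by
      rw [← norm_st, hnorm]
    have hprod : 0 < (a.re + a.im) * (a.re - a.im) := by rw [hst]; positivity
    have hpos : 0 < a.re + a.im ∧ 0 < a.re - a.im := by
      rcases mul_pos_iff.mp hprod with ⟨h1, h2⟩ | ⟨h1, h2⟩
      · exact ⟨h1, h2⟩
      · omega
    obtain ⟨i, hi, hassoc⟩ := (dvd_prime_pow Int.prime_two _).mp ⟨_, hst.symm⟩
    have hip : (0:ℤ) < 2 ^ i := by positivity
    have hs : a.re + a.im = 2 ^ i := by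
      rcases Int.associated_iff.mp hassoc with h' | h'
      · exact h'
      · omega
    have ht : a.re - a.im = 2 ^ (γ + 2 - i) := by
      have h2 : (a.re + a.im) * (a.re - a.im) = (a.re + a.im) * 2 ^ (γ + 2 - i) := by
        rw [hst, hs, ← pow_add]
        congr 1
        omega
      exact mul_left_cancel₀ hpos.1.ne' h2
    have hdvd2 : (2:ℤ) ∣ 2 ^ (γ + 2) := dvd_pow_self 2 (by omega)
    have hi1 : 1 ≤ i := by
      by_contra hc
      have hi0 : i = 0 := by omega
      rw [hi0, pow_zero] at hs
      rw [show γ + 2 - i = γ + 2 by omega] at ht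
      omega
    have hi2 : i ≤ γ + 1 := by
      by_contra hc
      have hi0 : i = γ + 2 := by omega
      rw [hi0] at hs
      rw [show γ + 2 - i = 0 by omega, pow_zero] at ht
      omega
    obtain ⟨k, rfl⟩ : ∃ k, i = k + 1 := ⟨i - 1, by omega⟩
    have hk : k ≤ γ := by omega
    have e1 : (2:ℤ) ^ (k + 1) = 2 * 2 ^ k := by ring
    have e2 : (2:ℤ) ^ (γ + 2 - (k + 1)) = 2 * 2 ^ (γ - k) := by
      rw [show γ + 2 - (k + 1) = (γ - k) + 1 by omega]; ring
    rw [e1] at hs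
    rw [e2] at ht
    have hre' : a.re = 2 ^ k + 2 ^ (γ - k) := by omega
    have him : a.im = 2 ^ k - 2 ^ (γ - k) := by omega
    by_cases hk0 : k = 0
    · right
      subst hk0
      apply Zsqrtd.ext
      · show a.re = 2 ^ γ + 1
        rw [hre', pow_zero, Nat.sub_zero]; ring
      · show a.im = -(2 ^ γ - 1)
        rw [him, pow_zero, Nat.sub_zero]; ring
    by_cases hkγ : k = γ
    · left
      subst hkγ
      apply Zsqrtd.ext
      · show a.re = 2 ^ k + 1
        rw [hre', Nat.sub_self, pow_zero]
      · show a.im = 2 ^ k - 1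
        rw [him, Nat.sub_self, pow_zero]
    exfalso
    obtain ⟨m, rfl⟩ : ∃ m, k = m + 1 := ⟨k - 1, by omega⟩
    obtain ⟨n, hn⟩ : ∃ n, γ - (m + 1) = n + 1 := ⟨γ - m - 2, by omega⟩
    rw [hn] at hre' him
    set z : ℤ√1 := ⟨2 ^ m + 1, 2 ^ m - 1⟩ with hz
    set w : ℤ√1 := ⟨2 ^ n + 1, 1 - 2 ^ n⟩ with hw
    have hzw : a = z * w := by
      apply Zsqrtd.ext
      · rw [hre']
        simp only [Zsqrtd.re_mul, hz, hw]
        ring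
      · rw [him]
        simp only [Zsqrtd.im_mul, hz, hw]
        ring
    have hm1 : (1:ℤ) ≤ 2 ^ m := one_le_pow₀ (by norm_num)
    have hn1 : (1:ℤ) ≤ 2 ^ n := one_le_pow₀ (by norm_num)
    rcases h.isUnit_or_isUnit hzw with hu | hu <;>
      rw [isUnit_iff_norm, norm_st] at hu
    · simp only [hz] at hu
      rcases hu with hu | hu <;> nlinarith
    · simp only [hw] at hu
      rcases hu with hu | hu <;> nlinarith
  · rintro (rfl | rfl) <;> apply irr_aux γ
    · left
      constructor
      · show (2 ^ γ + 1) + (2 ^ γ - 1) = 2 ^ (γ + 1)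
        rw [pow_succ]; ring
      · show (2 ^ γ + 1) - (2 ^ γ - 1) = 2
        ring
    · right
      constructor
      · show (2 ^ γ + 1) + -(2 ^ γ - 1) = 2
        ring
      · show (2 ^ γ + 1) - -(2 ^ γ - 1) = 2 ^ (γ + 1)
        rw [pow_succ]; ring
end

section
/- An element a ∈ ℤ[j] with η(a) ≠ 0 is irreducible and not prime in ℤ[j] if and only if a is associated to (2^γ + 1) + j(2^γ − 1) or to (2^γ + 1) − j(2^γ − 1) for some natural number γ ≥ 0. -/
/-!
In the light-cone coordinates `u = x + y`, `v = x - y` the ring `ℤ[j]` becomes the subring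
`{(s, t) : s ≡ t [ZMOD 2]}` of `ℤ × ℤ`, with `η = u v` and units `(±1, ±1)`.
If `u a` is odd, an irreducible `a` splits as `(u a, 1) (1, v a)`, so one coordinate is a unit and
`a` inherits primality from the other one, which is an irreducible, hence prime, integer.
If `u a` is even, splitting off odd factors shows that `u a` and `v a` are `±` powers of two, and
splitting off `(2, 2)` shows that one of them is `±2`. Conversely such elements are irreducible,
but never prime, because `(1 + j) (1 - j) = 0` while neither factor is divisible by them.
-/

namespace Int

lemma not_two_dvd_of_isUnit {m : ℤ} (h : IsUnit m) : ¬ 2 ∣ m := by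
  rcases Int.isUnit_iff.1 h with rfl | rfl <;> decide

lemma isUnit_of_not_two_dvd_of_dvd_two_pow {m : ℤ} {n : ℕ} (hm : ¬ 2 ∣ m) (h : m ∣ 2 ^ n) :
    IsUnit m :=
  have hodd : Odd m := Int.not_even_iff_odd.1 (by rwa [even_iff_two_dvd])
  (Int.isCoprime_two_left.2 hodd).pow_left.symm.isUnit_of_dvd' dvd_rfl h

lemma four_dvd_of_associated_two_pow {m : ℤ} {n : ℕ} (hm : Associated m (2 ^ n))
    (hn : 2 ≤ n) : 4 ∣ m :=
  hm.dvd_iff_dvd_right.2 (pow_dvd_pow 2 hn)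

end Int

namespace HyperbolicInt

def u : ℤ√1 →+* ℤ := Zsqrtd.lift ⟨1, by norm_num⟩

def v : ℤ√1 →+* ℤ := Zsqrtd.lift ⟨-1, by norm_num⟩

lemma u_apply (z : ℤ√1) : u z = z.re + z.im := by simp [u]

lemma v_apply (z : ℤ√1) : v z = z.re - z.im := by simp [v, sub_eq_add_neg]

@[simp] lemma u_star (z : ℤ√1) : u (star z) = v z := by simp [u_apply, v_apply, sub_eq_add_neg]

@[simp] lemma v_star (z : ℤ√1) : v (star z) = u z := by simp [u_apply, v_apply]

lemma irreducible_star {z : ℤ√1} : Irreducible (star z) ↔ Irreducible z :=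
  MulEquiv.irreducible_iff (starRingAut (R := ℤ√1))

lemma prime_star {z : ℤ√1} : Prime (star z) ↔ Prime z :=
  MulEquiv.prime_iff (starRingAut (R := ℤ√1))

lemma norm_eq_u_mul_v (z : ℤ√1) : z.norm = u z * v z := by
  simp [Zsqrtd.norm_def, u_apply, v_apply]; ring

lemma two_dvd_u_sub_v (z : ℤ√1) : 2 ∣ u z - v z := ⟨z.im, by rw [u_apply, v_apply]; ring⟩

lemma ext_u_v {z w : ℤ√1} (hu : u z = u w) (hv : v z = v w) : z = w := by
  simp only [u_apply, v_apply] at hu hv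
  ext <;> omega

lemma exists_u_v_eq {s t : ℤ} (h : 2 ∣ s - t) : ∃ z : ℤ√1, u z = s ∧ v z = t := by
  obtain ⟨k, hk⟩ := h
  exact ⟨⟨t + k, k⟩, by simp only [u_apply]; omega, by simp only [v_apply]; ring⟩

lemma isUnit_iff_isUnit_u_v {a : ℤ√1} : IsUnit a ↔ IsUnit (u a) ∧ IsUnit (v a) := by
  refine ⟨fun h => ⟨h.map u, h.map v⟩, fun ⟨hu, hv⟩ => IsUnit.of_mul_eq_one a ?_⟩
  exact ext_u_v (by rw [map_mul, Int.isUnit_mul_self hu, map_one])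
    (by rw [map_mul, Int.isUnit_mul_self hv, map_one])

lemma associated_of_associated_u_v {a b : ℤ√1} (hu : Associated (u a) (u b))
    (hv : Associated (v a) (v b)) : Associated a b := by
  obtain ⟨ε, hε⟩ := hu
  obtain ⟨δ, hδ⟩ := hv
  have hε₂ := Int.not_two_dvd_of_isUnit ε.isUnit
  have hδ₂ := Int.not_two_dvd_of_isUnit δ.isUnit
  obtain ⟨w, hwu, hwv⟩ := exists_u_v_eq (s := ε) (t := δ) (by omega)
  have hw : IsUnit w := isUnit_iff_isUnit_u_v.2 ⟨hwu ▸ ε.isUnit, hwv ▸ δ.isUnit⟩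
  exact ⟨hw.unit, ext_u_v (by rw [map_mul, hw.unit_spec, hwu, hε])
    (by rw [map_mul, hw.unit_spec, hwv, hδ])⟩

lemma isUnit_or_isUnit_of_u_v {a : ℤ√1} (hirr : Irreducible a) {s₁ s₂ t₁ t₂ : ℤ}
    (hu : u a = s₁ * s₂) (hv : v a = t₁ * t₂) (h₁ : 2 ∣ s₁ - t₁) (h₂ : 2 ∣ s₂ - t₂) :
    IsUnit s₁ ∧ IsUnit t₁ ∨ IsUnit s₂ ∧ IsUnit t₂ := by
  obtain ⟨b, rfl, rfl⟩ := exists_u_v_eq h₁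
  obtain ⟨c, rfl, rfl⟩ := exists_u_v_eq h₂
  simpa only [isUnit_iff_isUnit_u_v] using
    hirr.isUnit_or_isUnit (ext_u_v (by rw [hu, map_mul]) (by rw [hv, map_mul]))

lemma dvd_iff_v_dvd_v_of_isUnit_u {a b : ℤ√1} (ha : IsUnit (u a)) : a ∣ b ↔ v a ∣ v b := by
  refine ⟨map_dvd v, fun ⟨t, ht⟩ => ?_⟩
  obtain ⟨m, hm⟩ := two_dvd_u_sub_v a
  obtain ⟨n, hn⟩ := two_dvd_u_sub_v b
  have hsq := Int.isUnit_mul_self ha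
  obtain ⟨c, hcu, hcv⟩ := exists_u_v_eq (s := u a * u b) (t := t)
    ⟨u a * (n - m * t), by linear_combination u a * hn + u a * ht - u a * t * hm + t * hsq⟩
  exact ⟨c, ext_u_v (by rw [map_mul, hcu, ← mul_assoc, hsq, one_mul]) (by rw [map_mul, hcv, ht])⟩

lemma prime_of_irreducible_of_isUnit_u {a : ℤ√1} (hirr : Irreducible a) (ha : IsUnit (u a)) :
    Prime a := by
  have ha₂ := Int.not_two_dvd_of_isUnit ha
  have hodd : ¬ 2 ∣ v a := by
    have := two_dvd_u_sub_v a
    omega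
  have hv : Irreducible (v a) := by
    refine ⟨fun h => hirr.not_isUnit (isUnit_iff_isUnit_u_v.2 ⟨ha, h⟩), fun m n hmn => ?_⟩
    have hm : ¬ 2 ∣ m := fun h => hodd (hmn ▸ dvd_mul_of_dvd_left h n)
    have hn : ¬ 2 ∣ n := fun h => hodd (hmn ▸ dvd_mul_of_dvd_right h m)
    exact (isUnit_or_isUnit_of_u_v hirr (mul_one (u a)).symm hmn (by omega) (by omega)).imp
      And.right And.right
  refine ⟨hirr.ne_zero, hirr.not_isUnit, fun x y hxy => ?_⟩
  simp only [dvd_iff_v_dvd_v_of_isUnit_u ha, map_mul] at hxy ⊢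
  exact hv.prime.dvd_or_dvd hxy

lemma prime_of_irreducible_of_not_two_dvd_u {a : ℤ√1} (hirr : Irreducible a)
    (hodd : ¬ 2 ∣ u a) : Prime a := by
  have := two_dvd_u_sub_v a
  rcases isUnit_or_isUnit_of_u_v hirr (mul_one (u a)).symm (one_mul (v a)).symm (by omega)
    (by omega) with ⟨hu, -⟩ | ⟨-, hv⟩
  · exact prime_of_irreducible_of_isUnit_u hirr hu
  · exact prime_star.1 <|
      prime_of_irreducible_of_isUnit_u (irreducible_star.2 hirr) (by rwa [u_star])

lemma isUnit_of_not_two_dvd_of_dvd_u {a : ℤ√1} (hirr : Irreducible a) (heven : 2 ∣ u a)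
    {m : ℤ} (hm : ¬ 2 ∣ m) (hdvd : m ∣ u a) : IsUnit m := by
  obtain ⟨c, hc⟩ := hdvd
  have hc₂ : 2 ∣ c := (Int.prime_two.dvd_or_dvd (hc ▸ heven)).resolve_left hm
  have := two_dvd_u_sub_v a
  rcases isUnit_or_isUnit_of_u_v hirr hc (one_mul (v a)).symm (by omega) (by omega)
    with ⟨h, -⟩ | ⟨h, -⟩
  · exact h
  · exact absurd hc₂ (Int.not_two_dvd_of_isUnit h)

lemma exists_associated_u_two_pow_succ {a : ℤ√1} (hirr : Irreducible a) (heven : 2 ∣ u a)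
    (hu₀ : u a ≠ 0) : ∃ k : ℕ, Associated (u a) (2 ^ (k + 1)) := by
  obtain ⟨c, hc, hc₂⟩ :=
    (Int.finiteMultiplicity_iff (a := 2).2 ⟨by decide, hu₀⟩).exists_eq_pow_mul_and_not_dvd
  have hcu : IsUnit c :=
    isUnit_of_not_two_dvd_of_dvd_u hirr heven hc₂ ⟨_, hc.trans (mul_comm _ _)⟩
  obtain ⟨k, hk⟩ := Nat.exists_eq_succ_of_ne_zero fun h0 : multiplicity 2 (u a) = 0 => by
    rw [h0, pow_zero, one_mul] at hc
    exact hc₂ (hc ▸ heven)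
  have := associated_mul_unit_left (2 ^ multiplicity 2 (u a)) c hcu
  rw [← hc, hk] at this
  exact ⟨k, this⟩

lemma not_four_dvd_u_and_v {a : ℤ√1} (hirr : Irreducible a) : ¬ (4 ∣ u a ∧ 4 ∣ v a) := by
  rintro ⟨⟨c, hc⟩, ⟨d, hd⟩⟩
  rcases isUnit_or_isUnit_of_u_v hirr (s₁ := 2) (t₁ := 2) (s₂ := 2 * c) (t₂ := 2 * d)
    (by rw [hc]; ring) (by rw [hd]; ring) (by norm_num) ⟨c - d, by ring⟩ with ⟨h, -⟩ | ⟨h, -⟩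
  · exact Int.not_two_dvd_of_isUnit h dvd_rfl
  · exact Int.not_two_dvd_of_isUnit h (dvd_mul_right 2 c)

lemma u_mk_two_pow (γ : ℕ) : u ⟨2 ^ γ + 1, 2 ^ γ - 1⟩ = 2 ^ (γ + 1) := by
  rw [u_apply]; ring

lemma v_mk_two_pow (γ : ℕ) : v ⟨2 ^ γ + 1, 2 ^ γ - 1⟩ = 2 := by
  rw [v_apply]; ring

lemma exists_associated_of_irreducible_of_two_dvd_u {a : ℤ√1} (hirr : Irreducible a)
    (heven : 2 ∣ u a) (hu₀ : u a ≠ 0) (hv₀ : v a ≠ 0) :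
    ∃ γ : ℕ, Associated a ⟨2 ^ γ + 1, 2 ^ γ - 1⟩ ∨ Associated a ⟨2 ^ γ + 1, -(2 ^ γ - 1)⟩ := by
  obtain ⟨k, hk⟩ := exists_associated_u_two_pow_succ hirr heven hu₀
  obtain ⟨l, hl⟩ : ∃ l : ℕ, Associated (v a) (2 ^ (l + 1)) := by
    have := two_dvd_u_sub_v a
    simpa only [u_star] using exists_associated_u_two_pow_succ (irreducible_star.2 hirr)
      (by rw [u_star]; omega) (by rwa [u_star])
  obtain rfl | hl₀ := eq_or_ne l 0
  · exact ⟨k, .inl <| associated_of_associated_u_v (by rwa [u_mk_two_pow])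
      (by rwa [v_mk_two_pow, ← pow_one 2])⟩
  obtain rfl | hk₀ := eq_or_ne k 0
  · refine ⟨l, .inr ?_⟩
    change Associated a (star ⟨_, _⟩)
    exact associated_of_associated_u_v (by rwa [u_star, v_mk_two_pow, ← pow_one 2])
      (by rwa [v_star, u_mk_two_pow])
  exact absurd ⟨Int.four_dvd_of_associated_two_pow hk (by omega),
    Int.four_dvd_of_associated_two_pow hl (by omega)⟩ (not_four_dvd_u_and_v hirr)

lemma irreducible_of_u_eq_two_pow_of_v_eq_two {a : ℤ√1} {n : ℕ} (hu : u a = 2 ^ n)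
    (hv : v a = 2) : Irreducible a := by
  refine ⟨fun h => Int.not_two_dvd_of_isUnit (isUnit_iff_isUnit_u_v.1 h).2 (hv ▸ dvd_rfl),
    fun b c hbc => ?_⟩
  -- the factor with odd `v` is a unit: its `u` is an odd divisor of `2 ^ n`
  have key : ∀ {b c : ℤ√1}, a = b * c → IsUnit (v b) → IsUnit b := fun {b c} hbc hb => by
    have := Int.not_two_dvd_of_isUnit hb
    have := two_dvd_u_sub_v b
    have hdvd : u b ∣ 2 ^ n := ⟨u c, by rw [← hu, hbc, map_mul]⟩
    exact isUnit_iff_isUnit_u_v.2 ⟨Int.isUnit_of_not_two_dvd_of_dvd_two_pow (by omega) hdvd, hb⟩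
  have h2 : (2 : ℤ) = v b * v c := by rw [← hv, hbc, map_mul]
  exact (Int.prime_two.irreducible.isUnit_or_isUnit h2).imp (key hbc)
    (key (hbc.trans (mul_comm b c)))

lemma not_dvd_one_add_j {z : ℤ√1} (hz : 2 ∣ u z) (hz₀ : v z ≠ 0) : ¬ z ∣ ⟨1, 1⟩ := by
  rintro ⟨c, hc⟩
  have hvc : v c = 0 := by
    have h0 : v z * v c = 0 := by rw [← map_mul, ← hc, v_apply]; rfl
    exact (mul_eq_zero.1 h0).resolve_left hz₀
  have huc : 2 ∣ u c := by have := two_dvd_u_sub_v c; omega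
  have : (4 : ℤ) ∣ 2 := by
    have h2 : u z * u c = 2 := by rw [← map_mul, ← hc, u_apply]; rfl
    exact h2 ▸ mul_dvd_mul hz huc
  omega

lemma not_prime_of_two_dvd_u {a : ℤ√1} (hu : 2 ∣ u a) (hu₀ : u a ≠ 0) (hv₀ : v a ≠ 0) :
    ¬ Prime a := by
  have hv : 2 ∣ v a := by have := two_dvd_u_sub_v a; omega
  have h0 : (⟨1, 1⟩ * ⟨1, -1⟩ : ℤ√1) = 0 := Zsqrtd.ext rfl rfl
  intro hp
  rcases hp.dvd_or_dvd (h0 ▸ dvd_zero a) with h | h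
  · exact not_dvd_one_add_j hu hv₀ h
  · exact not_dvd_one_add_j (z := star a) (by rwa [u_star]) (by rwa [v_star])
      (map_dvd (starRingEnd _) h)

lemma irreducible_and_not_prime_mk_two_pow (γ : ℕ) :
    Irreducible (⟨2 ^ γ + 1, 2 ^ γ - 1⟩ : ℤ√1) ∧ ¬ Prime (⟨2 ^ γ + 1, 2 ^ γ - 1⟩ : ℤ√1) := by
  have hu := u_mk_two_pow γ
  refine ⟨irreducible_of_u_eq_two_pow_of_v_eq_two hu (v_mk_two_pow γ),
    not_prime_of_two_dvd_u ?_ ?_ ?_⟩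
  · exact hu ▸ dvd_pow_self 2 γ.succ_ne_zero
  · exact hu ▸ pow_ne_zero _ two_ne_zero
  · rw [v_mk_two_pow]; exact two_ne_zero

end HyperbolicInt

open HyperbolicInt in
/-- An element `a ∈ ℤ[j]` with `η(a) ≠ 0` is irreducible and not prime iff `a` is
associated to `(2^γ + 1) + j(2^γ − 1)` or to `(2^γ + 1) − j(2^γ − 1)` for some `γ ≥ 0`. -/
theorem irreducible_not_prime_iff_associated (a : ℤ√1) (ha : Zsqrtd.norm a ≠ 0) :
    (Irreducible a ∧ ¬ Prime a) ↔
      ∃ γ : ℕ, Associated a ⟨2 ^ γ + 1, 2 ^ γ - 1⟩ ∨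
        Associated a ⟨2 ^ γ + 1, -(2 ^ γ - 1)⟩ := by
  rw [norm_eq_u_mul_v] at ha
  constructor
  · rintro ⟨hirr, hnp⟩
    by_cases heven : 2 ∣ u a
    · exact exists_associated_of_irreducible_of_two_dvd_u hirr heven (left_ne_zero_of_mul ha)
        (right_ne_zero_of_mul ha)
    · exact absurd (prime_of_irreducible_of_not_two_dvd_u hirr heven) hnp
  · rintro ⟨γ, h | h⟩ <;> obtain ⟨hirr, hnp⟩ := irreducible_and_not_prime_mk_two_pow γ
    · exact ⟨h.symm.irreducible hirr, hnp ∘ h.prime⟩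
    · exact ⟨h.symm.irreducible (irreducible_star.2 hirr), hnp ∘ prime_star.1 ∘ h.prime⟩
end

section
/- Let z = x + εy ∈ ℤ[k] with x > 0. Then: (a) if x is a prime number, z is irreducible in ℤ[k]; (b) if x is not a power of a prime (i.e. x = mn with m, n coprime, m ≠ ±1, n ≠ ±1), then z is not irreducible; (c) if x = p^γ with p a prime number and γ ≥ 2, then z is not irreducible if and only if p divides y. -/
open DualNumber TrivSqZeroExt

noncomputable def Zk_mk (a b : ℤ) : DualNumber ℤ := inl a + inr b

@[simp] lemma Zk_fst_mk (a b : ℤ) : fst (Zk_mk a b) = a := by simp [Zk_mk]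

@[simp] lemma Zk_snd_mk (a b : ℤ) : snd (Zk_mk a b) = b := by simp [Zk_mk]

lemma Zk_unit_iff (w : DualNumber ℤ) : IsUnit w ↔ IsUnit (fst w) :=
  isUnit_iff_isUnit_fst

lemma Zk_mk_mul (a b c d : ℤ) :
    Zk_mk a b * Zk_mk c d = Zk_mk (a * c) (a * d + b * c) := by
  ext
  · simp [fst_mul]
  · simp [DualNumber.snd_mul]

lemma Zk_eq_mk (z : DualNumber ℤ) : z = Zk_mk (fst z) (snd z) :=
  (inl_fst_add_inr_snd_eq z).symm

/-- Let `z = x + εy ∈ ℤ[k]` with `x = fst z > 0`. Then: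
(a) if `x` is prime, `z` is irreducible;
(b) if `x` is not a power of a prime (i.e. `x = mn` with `m, n` coprime and
`m ≠ ±1`, `n ≠ ±1`), then `z` is not irreducible;
(c) if `x = p^γ` with `p` prime and `γ ≥ 2`, then `z` is not irreducible iff `p ∣ y`. -/
theorem irreducibility_in_Zk (z : DualNumber ℤ) (hx : 0 < fst z) :
    (Prime (fst z) → Irreducible z) ∧
    ((∃ m n : ℤ, fst z = m * n ∧ IsCoprime m n ∧
        m ≠ 1 ∧ m ≠ -1 ∧ n ≠ 1 ∧ n ≠ -1) → ¬ Irreducible z) ∧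
    (∀ (p : ℤ) (γ : ℕ), Prime p → 2 ≤ γ → fst z = p ^ γ →
      (¬ Irreducible z ↔ p ∣ snd z)) := by
  refine ⟨?_, ?_, ?_⟩
  · intro hp
    constructor
    · rw [Zk_unit_iff]
      exact hp.not_unit
    · intro a b hab
      have hf : fst z = fst a * fst b := by rw [hab, fst_mul]
      rw [Zk_unit_iff, Zk_unit_iff]
      exact hp.irreducible.isUnit_or_isUnit hf
  · rintro ⟨m, n, hmn, hco, hm1, hm1', hn1, hn1'⟩ hirr
    obtain ⟨u, v, huv⟩ := hco
    have hfac : z = Zk_mk m (v * snd z) * Zk_mk n (u * snd z) := by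
      rw [Zk_mk_mul]
      have h1 : m * n = fst z := hmn.symm
      have h2 : m * (u * snd z) + v * snd z * n = snd z := by
        linear_combination (snd z) * huv
      rw [h1, h2, ← Zk_eq_mk]
    rcases hirr.isUnit_or_isUnit hfac with h | h <;>
      rw [Zk_unit_iff] at h <;> simp only [Zk_fst_mk] at h
    · rcases Int.isUnit_iff.mp h with h | h
      exacts [hm1 h, hm1' h]
    · rcases Int.isUnit_iff.mp h with h | h
      exacts [hn1 h, hn1' h]
  · intro p γ hp hγ hxp
    have hdvd_of_fac : ∀ a : ℤ, a ∣ p ^ γ → ¬ IsUnit a → p ∣ a := by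
      intro a ha hau
      obtain ⟨i, _, hassoc⟩ := (dvd_prime_pow hp γ).mp ha
      rcases Nat.eq_zero_or_pos i with rfl | hi
      · simp only [pow_zero] at hassoc
        exact absurd (hassoc.symm.isUnit isUnit_one) hau
      · exact dvd_trans (dvd_pow_self p hi.ne') hassoc.symm.dvd
    constructor
    · intro hirr
      have hnu : ¬ IsUnit z := by
        rw [Zk_unit_iff, hxp]
        exact fun h => hp.not_unit (isUnit_of_dvd_unit (dvd_pow_self p (by omega)) h)
      rw [irreducible_iff] at hirr
      push_neg at hirr
      obtain ⟨a, b, hab, ha, hb⟩ := hirr hnu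
      have hf : fst a * fst b = p ^ γ := by rw [← fst_mul, ← hab, hxp]
      have hpa : p ∣ fst a :=
        hdvd_of_fac _ ⟨fst b, hf.symm⟩ (fun h => ha (Zk_unit_iff a |>.mpr h))
      have hpb : p ∣ fst b :=
        hdvd_of_fac _ ⟨fst a, by rw [← hf]; ring⟩ (fun h => hb (Zk_unit_iff b |>.mpr h))
      rw [hab, DualNumber.snd_mul]
      exact dvd_add (hpa.mul_right _) (Dvd.dvd.mul_left hpb _)
    · rintro hpy hirr
      obtain ⟨c, hc⟩ := hpy
      have hfac : z = Zk_mk p 0 * Zk_mk (p ^ (γ - 1)) c := by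
        rw [Zk_mk_mul]
        have h1 : p * p ^ (γ - 1) = fst z := by
          rw [hxp, ← pow_succ']
          congr 1
          omega
        have h2 : p * c + 0 * p ^ (γ - 1) = snd z := by rw [hc]; ring
        rw [h1, h2, ← Zk_eq_mk]
      rcases hirr.isUnit_or_isUnit hfac with h | h <;>
        rw [Zk_unit_iff] at h <;> simp only [Zk_fst_mk] at h
      · exact hp.not_unit h
      · exact hp.not_unit (isUnit_of_dvd_unit (dvd_pow_self p (by omega)) h)
end
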